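/- arXiv:2102.09058 — 4 statements merged into one kernel-verified Lean document; each statement's English description precedes it below -/
import Mathlib

section
/- Suppose 0 < |a(g)| < a(ι), and let λ_u(g) be defined by the two-case formula of the previous statement. Then for λ > λ_0: |b(g) − λ a(g)| ≥ |b(ι) − λ a(ι)| if and only if λ ≤ λ_u(g). -/
/-! For `λ > λ₀` the left side is `A (λ - λ₀)`, a line through `λ₀` of slope `A`, while the right
side is `|a(g)| · |μ - λ|` with `μ = b(g)/a(g)`, a tent of slope `±|a(g)|` with apex at `μ`.
Since `|a(g)| < A`, the line crosses the tent exactly once on `(λ₀, ∞)`: on its descending branch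
when `μ ≥ λ₀`, giving the weighted mean of `λ₀` and `μ`, and on its ascending branch when `μ < λ₀`. -/

lemma abs_sub_mul_eq_abs_mul_abs_div_sub {a b : ℝ} (ha : a ≠ 0) (x : ℝ) :
    |b - x * a| = |a| * |b / a - x| := by
  rw [← abs_mul, mul_sub, mul_div_cancel₀ b ha, mul_comm x a]

lemma abs_sub_mul_eq_mul_sub_div {A B x : ℝ} (hA : 0 < A) (hx : B / A < x) :
    |B - x * A| = A * (x - B / A) := by
  rw [abs_sub_mul_eq_abs_mul_abs_div_sub hA.ne', abs_of_pos hA, abs_sub_comm,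
    abs_of_pos (sub_pos.mpr hx)]

section Crossing

variable {A c l₀ μ x : ℝ}

lemma mul_sub_le_mul_abs_sub_iff_of_le (hc : 0 ≤ c) (hcA : c < A) (hμ : l₀ ≤ μ) (hx : l₀ < x) :
    A * (x - l₀) ≤ c * |μ - x| ↔ x ≤ l₀ * (A / (A + c)) + μ * (c / (A + c)) := by
  have hAc : 0 < A + c := by linarith
  have hmean : l₀ * (A / (A + c)) + μ * (c / (A + c)) = (A * l₀ + c * μ) / (A + c) := by
    field_simp
  rw [hmean, le_div_iff₀ hAc]
  rcases le_or_gt x μ with hxμ | hμx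
  · rw [abs_of_nonneg (sub_nonneg.mpr hxμ)]
    constructor <;> intro h <;> linarith
  · rw [abs_of_neg (sub_neg.mpr hμx)]
    constructor <;> intro h <;> nlinarith

lemma mul_sub_le_mul_abs_sub_iff_of_lt (hcA : c < A) (hμ : μ < l₀) (hx : l₀ < x) :
    A * (x - l₀) ≤ c * |μ - x| ↔ x ≤ l₀ * (A / (A - c)) - μ * (c / (A - c)) := by
  have hAc : 0 < A - c := by linarith
  have hmean : l₀ * (A / (A - c)) - μ * (c / (A - c)) = (A * l₀ - c * μ) / (A - c) := by
    field_simp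
  rw [hmean, le_div_iff₀ hAc, abs_of_neg (by linarith : μ - x < 0)]
  constructor <;> intro h <;> linarith

end Crossing

theorem stmt_7 (A B ag bg : ℝ) (hA : 0 < A) (hag : 0 < |ag|) (hlt : |ag| < A)
    (lam0 : ℝ) (hlam0 : lam0 = B / A)
    (lamu : ℝ)
    (hlamu : lamu = if lam0 ≤ bg / ag then
        (B / A) * (|A| / (|A| + |ag|)) + (bg / ag) * (|ag| / (|A| + |ag|))
      else
        (B / A) * (|A| / (|A| - |ag|)) - (bg / ag) * (|ag| / (|A| - |ag|))) :
    ∀ lam : ℝ, lam0 < lam → (|B - lam * A| ≤ |bg - lam * ag| ↔ lam ≤ lamu) := by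
  intro lam hlam
  subst hlam0 hlamu
  rw [abs_sub_mul_eq_mul_sub_div hA hlam, abs_sub_mul_eq_abs_mul_abs_div_sub (abs_pos.mp hag),
    abs_of_pos hA]
  split_ifs with hμ
  · exact mul_sub_le_mul_abs_sub_iff_of_le (abs_nonneg ag) hlt hμ hlam
  · exact mul_sub_le_mul_abs_sub_iff_of_lt hlt (not_le.mp hμ) hlam
end

section
/- The p-value function λ ↦ p̂(λ) = (1/2^q) ∑_{g} I{|b(g) − λ a(g)| ≥ |b(ι) − λ a(ι)|} is non-decreasing on (−∞, λ_0) and non-increasing on (λ_0, ∞), where λ_0 = b(ι)/a(ι). -/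
open Finset

theorem stmt_10 (q : ℕ) (hq : 1 ≤ q) (w x : Fin q → ℝ) (hw : ∀ j, 0 < w j)
    (a b : (Fin q → Bool) → ℝ)
    (ha : ∀ g, a g = (∑ j, w j * (if g j then (1 : ℝ) else -1)) / q)
    (hb : ∀ g, b g = (∑ j, w j * (if g j then (1 : ℝ) else -1) * x j) / q)
    (ι : Fin q → Bool) (hι : ι = fun _ => true)
    (p : ℝ → ℝ)
    (hp : ∀ lam, p lam = (∑ g : Fin q → Bool,
        if |b ι - lam * a ι| ≤ |b g - lam * a g| then (1 : ℝ) else 0) / 2 ^ q) :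
    MonotoneOn p (Set.Iio (b ι / a ι)) ∧ AntitoneOn p (Set.Ioi (b ι / a ι)) := by
  have hq0 : (0:ℝ) < q := by exact_mod_cast hq
  have haι : 0 < a ι := by
    rw [ha, hι]
    apply div_pos _ hq0
    apply Finset.sum_pos _ (by simp [Finset.univ_nonempty_iff, Fin.pos_iff_nonempty.mp hq])
    intro j _
    simpa using (hw j)
  have hbι : b ι = (b ι / a ι) * a ι := by field_simp
  set lam0 := b ι / a ι with hlam0
  -- |a g| ≤ a ι
  have hag : ∀ g, |a g| ≤ a ι := by
    intro g
    rw [ha, ha, hι, abs_div, abs_of_pos hq0]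
    apply div_le_div_of_nonneg_right ?_ hq0.le |>.trans_eq rfl
    calc |∑ j, w j * (if g j then (1:ℝ) else -1)|
        ≤ ∑ j, |w j * (if g j then (1:ℝ) else -1)| := Finset.abs_sum_le_sum_abs _ _
      _ = ∑ j, w j * (if (fun _ => true) j then (1:ℝ) else -1) := by
          apply Finset.sum_congr rfl
          intro j _
          rcases g j with _ | _ <;>
            simp [abs_mul, abs_of_pos (hw j)]
  -- value of |b ι - lam * a ι|
  have hval : ∀ lam, |b ι - lam * a ι| = a ι * |lam0 - lam| := by
    intro lam
    rw [hbι]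
    rw [show lam0 * a ι - lam * a ι = a ι * (lam0 - lam) by ring, abs_mul,
      abs_of_pos haι]
  constructor
  · intro lam1 h1 lam2 h2 h12
    simp only [Set.mem_Iio] at h1 h2
    rw [hp, hp]
    apply div_le_div_of_nonneg_right ?_ (by positivity) |>.trans_eq rfl
    apply Finset.sum_le_sum
    intro g _
    split_ifs with hA hB hB
    · exact le_refl _
    · exfalso
      apply hB
      rw [hval, abs_of_pos (by linarith)]
      have key : |b g - lam1 * a g| ≤ |b g - lam2 * a g| + |a g| * (lam2 - lam1) := by
        calc |b g - lam1 * a g| = |(b g - lam2 * a g) + a g * (lam2 - lam1)| := by ring_nf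
          _ ≤ |b g - lam2 * a g| + |a g * (lam2 - lam1)| := abs_add_le _ _
          _ = |b g - lam2 * a g| + |a g| * (lam2 - lam1) := by
              rw [abs_mul, abs_of_nonneg (by linarith : (0:ℝ) ≤ lam2 - lam1)]
      rw [hval, abs_of_pos (by linarith)] at hA
      have h3 : |a g| * (lam2 - lam1) ≤ a ι * (lam2 - lam1) :=
        mul_le_mul_of_nonneg_right (hag g) (by linarith)
      nlinarith [hA, key]
    · norm_num
    · exact le_refl _
  · intro lam1 h1 lam2 h2 h12
    simp only [Set.mem_Ioi] at h1 h2
    rw [hp, hp]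
    apply div_le_div_of_nonneg_right ?_ (by positivity) |>.trans_eq rfl
    apply Finset.sum_le_sum
    intro g _
    split_ifs with hA hB hB
    · exact le_refl _
    · exfalso
      apply hB
      rw [hval, abs_of_neg (by linarith), neg_sub]
      have key : |b g - lam2 * a g| ≤ |b g - lam1 * a g| + |a g| * (lam2 - lam1) := by
        calc |b g - lam2 * a g| = |(b g - lam1 * a g) - a g * (lam2 - lam1)| := by ring_nf
          _ ≤ |b g - lam1 * a g| + |a g * (lam2 - lam1)| := abs_sub _ _
          _ = |b g - lam1 * a g| + |a g| * (lam2 - lam1) := by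
              rw [abs_mul, abs_of_nonneg (by linarith : (0:ℝ) ≤ lam2 - lam1)]
      rw [hval, abs_of_neg (by linarith), neg_sub] at hA
      have h3 : |a g| * (lam2 - lam1) ≤ a ι * (lam2 - lam1) :=
        mul_le_mul_of_nonneg_right (hag g) (by linarith)
      nlinarith [hA, key]
    · norm_num
    · exact le_refl _
end

section
/- For λ > λ_0, the p-value admits the representation p̂(λ) = (1/2^q) ∑_{g ∈ {-1,1}^q} I{λ ≤ λ_u(g)}, where λ_u(g) is defined case-by-case: λ_u(g) = +∞ if g = ±ι; λ_u(g) = b(ι)/a(ι) + |b(g)|/a(ι) if a(g) = 0; and λ_u(g) is the unique intersection point of λ ↦ |b(g) − λ a(g)| with λ ↦ |b(ι) − λ a(ι)| on (λ_0, ∞) if 0 < |a(g)| < a(ι). -/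
lemma key_aux (ag bg aι bι lam0 lu : ℝ) (haι : 0 < aι) (hbι : bι = lam0 * aι)
    (hlt : |ag| < aι)
    (hlu : lam0 < lu) (hroot : |bg - lu * ag| = |bι - lu * aι|)
    (huniq : ∀ t, lam0 < t → |bg - t * ag| = |bι - t * aι| → t = lu)
    (lam : ℝ) (hlam : lam0 < lam) :
    |bι - lam * aι| ≤ |bg - lam * ag| ↔ lam ≤ lu := by
  have habs : ∀ t, lam0 ≤ t → |bι - t * aι| = (t - lam0) * aι := by
    intro t ht
    have h1 : bι - t * aι = -((t - lam0) * aι) := by rw [hbι]; ring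
    rw [h1, abs_neg, abs_of_nonneg (by nlinarith)]
  set f : ℝ → ℝ := fun t => |bg - t * ag| - |bι - t * aι| with hf
  have hcont : Continuous f := by fun_prop
  have hfroot : f lu = 0 := by simp [hf, hroot]
  have hc : 0 < aι - |ag| := by linarith
  set M : ℝ := max (max lam lu + 1) (max 0 ((|bg| + lam0 * aι + 1) / (aι - |ag|))) with hM
  have hM0 : 0 ≤ M := le_trans (le_max_left _ _) (le_max_right _ _)
  have hMlam : lam < M := lt_of_lt_of_le (by linarith [le_max_left lam lu]) (le_max_left _ _)
  have hMlu : lu < M := by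
    have : lu < max lam lu + 1 := by
      have := le_max_right lam lu; linarith
    exact lt_of_lt_of_le this (le_max_left _ _)
  have hMc : |bg| + lam0 * aι + 1 ≤ M * (aι - |ag|) := by
    have h2 : (|bg| + lam0 * aι + 1) / (aι - |ag|) ≤ M :=
      le_trans (le_max_right _ _) (le_max_right _ _)
    calc |bg| + lam0 * aι + 1 = ((|bg| + lam0 * aι + 1) / (aι - |ag|)) * (aι - |ag|) := by
          field_simp
      _ ≤ M * (aι - |ag|) := by nlinarith
  have hfM : f M < 0 := by
    have h1 : |bg - M * ag| ≤ |bg| + M * |ag| := by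
      calc |bg - M * ag| ≤ |bg| + |M * ag| := abs_sub _ _
        _ = |bg| + M * |ag| := by rw [abs_mul, abs_of_nonneg hM0]
    have h2 : |bι - M * aι| = (M - lam0) * aι := habs M (by linarith)
    simp only [hf]
    rw [h2]; nlinarith
  constructor
  · intro h
    by_contra hcon
    push_neg at hcon
    have hflam : 0 ≤ f lam := by simp [hf]; linarith
    have : (0 : ℝ) ∈ Set.Icc (f M) (f lam) := ⟨le_of_lt hfM, hflam⟩
    obtain ⟨t, ht, hft⟩ := intermediate_value_Icc' (le_of_lt hMlam) hcont.continuousOn this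
    have := huniq t (lt_of_lt_of_le hlam ht.1) (by simp [hf] at hft; linarith)
    have : lu < t := lt_of_lt_of_le hcon ht.1
    linarith [this, (huniq t (lt_of_lt_of_le hlam ht.1) (by have := hft; simp only [hf] at this; linarith)) ]
  · intro h
    rcases eq_or_lt_of_le h with heq | hlt'
    · subst heq; simp [hf] at hfroot; linarith
    by_contra hcon
    push_neg at hcon
    have hflam : f lam < 0 := by simp [hf]; linarith
    have hf0 : 0 < f lam0 := by
      have hz : |bι - lam0 * aι| = 0 := by rw [habs lam0 le_rfl]; ring
      simp only [hf, hz, sub_zero]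
      rcases (abs_nonneg (bg - lam0 * ag)).lt_or_eq with h' | h'
      · exact h'
      · exfalso
        have hbg : bg = lam0 * ag := by
          have := abs_eq_zero.mp h'.symm; linarith
        have h3 : |bg - lu * ag| = (lu - lam0) * |ag| := by
          rw [hbg, show lam0 * ag - lu * ag = -((lu - lam0) * ag) by ring, abs_neg, abs_mul,
            abs_of_nonneg (by linarith)]
        have h4 : |bι - lu * aι| = (lu - lam0) * aι := habs lu (le_of_lt hlu)
        rw [h3, h4] at hroot
        have : |ag| = aι := by
          have hne : lu - lam0 ≠ 0 := by linarith
          exact mul_left_cancel₀ hne hroot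
        linarith
    have : (0 : ℝ) ∈ Set.Icc (f lam) (f lam0) := ⟨le_of_lt hflam, le_of_lt hf0⟩
    obtain ⟨t, ht, hft⟩ := intermediate_value_Icc' (le_of_lt hlam) hcont.continuousOn this
    have htgt : lam0 < t := by
      rcases ht.1.lt_or_eq with h' | h'
      · exact h'
      · exfalso; rw [← h'] at hft; linarith
    have := huniq t htgt (by simp only [hf] at hft; linarith)
    linarith [ht.2]

open Finset

theorem stmt_12 (q : ℕ) (hq : 1 ≤ q) (w x : Fin q → ℝ) (hw : ∀ j, 0 < w j)
    (a b : (Fin q → Bool) → ℝ)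
    (ha : ∀ g, a g = (∑ j, w j * (if g j then (1 : ℝ) else -1)) / q)
    (hb : ∀ g, b g = (∑ j, w j * (if g j then (1 : ℝ) else -1) * x j) / q)
    (ι nι : Fin q → Bool) (hι : ι = fun _ => true) (hnι : nι = fun _ => false)
    (lam0 : ℝ) (hlam0 : lam0 = b ι / a ι)
    (hablt : ∀ g, g ≠ ι → g ≠ nι → |a g| < a ι)
    (p : ℝ → ℝ)
    (hp : ∀ lam, p lam = (∑ g : Fin q → Bool,
        if |b ι - lam * a ι| ≤ |b g - lam * a g| then (1 : ℝ) else 0) / 2 ^ q)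
    (lamu : (Fin q → Bool) → ℝ)
    (hlamu0 : ∀ g, g ≠ ι → g ≠ nι → a g = 0 →
        lamu g = b ι / a ι + |b g| / a ι)
    (hlamu1 : ∀ g, g ≠ ι → g ≠ nι → a g ≠ 0 →
        (lam0 < lamu g ∧ |b g - lamu g * a g| = |b ι - lamu g * a ι| ∧
          ∀ lam, lam0 < lam → |b g - lam * a g| = |b ι - lam * a ι| → lam = lamu g)) :
    ∀ lam, lam0 < lam → p lam = (∑ g : Fin q → Bool,
        if g = ι ∨ g = nι then (1 : ℝ)
        else if lam ≤ lamu g then 1 else 0) / 2 ^ q := by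
  have hq0 : (0 : ℝ) < q := by exact_mod_cast hq
  have haι : 0 < a ι := by
    rw [ha, hι]
    apply div_pos _ hq0
    apply Finset.sum_pos _ ⟨⟨0, hq⟩, Finset.mem_univ _⟩
    intro j _
    simpa using hw j
  have hbι : b ι = lam0 * a ι := by
    rw [hlam0, div_mul_cancel₀ _ (ne_of_gt haι)]
  have hanι : a nι = -a ι := by
    rw [ha, ha, hι, hnι]
    simp [mul_neg, Finset.sum_neg_distrib, neg_div]
  have hbnι : b nι = -b ι := by
    rw [hb, hb, hι, hnι, ← neg_div]
    congr 1
    rw [← Finset.sum_neg_distrib]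
    refine Finset.sum_congr rfl fun j _ => ?_
    simp
  intro lam hlam
  rw [hp]
  congr 1
  apply Finset.sum_congr rfl
  intro g _
  by_cases hgι : g = ι
  · rw [if_pos (Or.inl hgι), hgι, if_pos le_rfl]
  by_cases hgnι : g = nι
  · have h1 : b g - lam * a g = -(b ι - lam * a ι) := by rw [hgnι, hanι, hbnι]; ring
    rw [h1, abs_neg, if_pos le_rfl, if_pos (Or.inr hgnι)]
  have habs : ∀ t, lam0 ≤ t → |b ι - t * a ι| = (t - lam0) * a ι := by
    intro t ht
    have h1 : b ι - t * a ι = -((t - lam0) * a ι) := by rw [hbι]; ring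
    rw [h1, abs_neg, abs_of_nonneg (by nlinarith)]
  have hne : ¬(g = ι ∨ g = nι) := by tauto
  rw [if_neg hne]
  by_cases hag : a g = 0
  · have hlu : lamu g = lam0 + |b g| / a ι := by
      rw [hlamu0 g hgι hgnι hag, hlam0]
    have hcond : |b ι - lam * a ι| ≤ |b g - lam * a g| ↔ lam ≤ lamu g := by
      rw [hag, mul_zero, sub_zero, habs lam (le_of_lt hlam), hlu,
        ← sub_le_iff_le_add', ← le_div_iff₀ haι]
    by_cases h : lam ≤ lamu g
    · rw [if_pos (hcond.mpr h), if_pos h]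
    · rw [if_neg (fun hc => h (hcond.mp hc)), if_neg h]
  · obtain ⟨hlu, hroot, huniq⟩ := hlamu1 g hgι hgnι hag
    have hcond := key_aux (a g) (b g) (a ι) (b ι) lam0 (lamu g) haι hbι
      (hablt g hgι hgnι) hlu hroot huniq lam hlam
    by_cases h : lam ≤ lamu g
    · rw [if_pos (hcond.mpr h), if_pos h]
    · rw [if_neg (fun hc => h (hcond.mp hc)), if_neg h]
end

section
/- Let f(λ) = |b(ι) − λ a(ι)| with a(ι) > 0 and h(λ) = |b(g) − λ a(g)| with |a(g)| < a(ι). Then the set {λ ∈ ℝ : h(λ) ≥ f(λ)} is a closed, bounded, nonempty interval containing λ_0 = b(ι)/a(ι). -/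
/-!
Squaring both sides, `|B - λA| ≤ |b - λa|` becomes a quadratic inequality in `λ` with leading
coefficient `a² - A² < 0`. Completing the square turns it into `((A² - a²)λ - (AB - ab))² ≤ (Ab - aB)²`,
whose solution set is the closed interval with endpoints `((AB - ab) ± |Ab - aB|) / (A² - a²)`.
It contains `B / A`, where the left-hand side vanishes.
-/

open Set

theorem mul_sub_sq_le_sq_iff_mem_Icc {c p d x : ℝ} (hc : 0 < c) :
    (c * x - p) ^ 2 ≤ d ^ 2 ↔ x ∈ Icc ((p - |d|) / c) ((p + |d|) / c) := by
  rw [sq_le_sq, abs_le, mem_Icc, div_le_iff₀ hc, le_div_iff₀ hc]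
  constructor <;> rintro ⟨h₁, h₂⟩ <;> constructor <;> linarith

theorem abs_sub_mul_le_abs_sub_mul_iff {A B a b x : ℝ} (ha : a ^ 2 < A ^ 2) :
    |B - x * A| ≤ |b - x * a| ↔
      ((A ^ 2 - a ^ 2) * x - (A * B - a * b)) ^ 2 ≤ (A * b - a * B) ^ 2 := by
  have hc : 0 < A ^ 2 - a ^ 2 := sub_pos.mpr ha
  have completed_square : (A ^ 2 - a ^ 2) * ((b - x * a) ^ 2 - (B - x * A) ^ 2) =
      (A * b - a * B) ^ 2 - ((A ^ 2 - a ^ 2) * x - (A * B - a * b)) ^ 2 := by ring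
  rw [← sq_le_sq, ← sub_nonneg, ← sub_nonneg (b := ((A ^ 2 - a ^ 2) * x - _) ^ 2),
    ← completed_square, mul_nonneg_iff_of_pos_left hc]

theorem setOf_abs_sub_mul_le_abs_sub_mul {A B a b : ℝ} (ha : a ^ 2 < A ^ 2) :
    {x : ℝ | |B - x * A| ≤ |b - x * a|} =
      Icc ((A * B - a * b - |A * b - a * B|) / (A ^ 2 - a ^ 2))
        ((A * B - a * b + |A * b - a * B|) / (A ^ 2 - a ^ 2)) := by
  ext x
  rw [mem_ofPred_eq, abs_sub_mul_le_abs_sub_mul_iff ha,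
    mul_sub_sq_le_sq_iff_mem_Icc (sub_pos.mpr ha)]

theorem stmt_16_general (A B ag bg : ℝ) (hlt : |ag| < A) :
    ∃ lo hi : ℝ,
      {lam : ℝ | |B - lam * A| ≤ |bg - lam * ag|} = Set.Icc lo hi ∧
      B / A ∈ Set.Icc lo hi := by
  have hA : A ≠ 0 := ((abs_nonneg ag).trans_lt hlt).ne'
  have hsq : ag ^ 2 < A ^ 2 := sq_lt_sq' (abs_lt.mp hlt).1 (abs_lt.mp hlt).2
  refine ⟨_, _, setOf_abs_sub_mul_le_abs_sub_mul hsq, ?_⟩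
  rw [← setOf_abs_sub_mul_le_abs_sub_mul hsq, mem_ofPred_eq, div_mul_cancel₀ B hA, sub_self,
    abs_zero]
  exact abs_nonneg _

theorem stmt_16 (A B ag bg : ℝ) (hA : 0 < A) (hlt : |ag| < A) :
    ∃ lo hi : ℝ,
      {lam : ℝ | |B - lam * A| ≤ |bg - lam * ag|} = Set.Icc lo hi ∧
      B / A ∈ Set.Icc lo hi :=
  stmt_16_general A B ag bg hlt
end
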